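/- Let p be a positive integer, let V₁, V₂ be real orthogonal p×p matrices (V_iᵀV_i = I), let D₁, D₂ be invertible diagonal real p×p matrices, and set Ω = D₁⁻¹V₁ᵀV₂D₂ and S = V₁D₁²V₁ᵀ + V₂D₂²V₂ᵀ. Then Ω⁻¹ + Ωᵀ is invertible, and D₁V₁ᵀ S⁻¹ V₂D₂ = (Ω⁻¹ + Ωᵀ)⁻¹. -/

import Mathlib

open Matrix

/-!
Write `P = V₁D₁` and `Q = V₂D₂`. Then `Ω = P⁻¹Q`, `D₁V₁ᵀ = Pᵀ` and
`S = PPᵀ + QQᵀ = P(1 + ΩΩᵀ)Pᵀ`, so `PᵀS⁻¹Q = (1 + ΩΩᵀ)⁻¹Ω = (Ω⁻¹(1 + ΩΩᵀ))⁻¹ = (Ω⁻¹ + Ωᵀ)⁻¹`.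
This identity holds over any commutative ring once `P` and `Q` are invertible; over an ordered
field `1 + ΩΩᵀ` is positive definite, which makes `Ω⁻¹ + Ωᵀ` invertible.
-/

namespace Matrix

variable {n : Type*} [Fintype n] [DecidableEq n]

section CommRing

variable {R : Type*} [CommRing R]

theorem inv_add_transpose_eq_inv_mul {Ω : Matrix n n R} (hΩ : IsUnit Ω) :
    Ω⁻¹ + Ωᵀ = Ω⁻¹ * (1 + Ω * Ωᵀ) := by
  rw [mul_add, mul_one, ← Matrix.mul_assoc, nonsing_inv_mul _ ((isUnit_iff_isUnit_det Ω).mp hΩ),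
    Matrix.one_mul]

theorem mul_transpose_add_mul_transpose_eq {P : Matrix n n R} (hP : IsUnit P) (Q : Matrix n n R) :
    P * Pᵀ + Q * Qᵀ = P * (1 + P⁻¹ * Q * (P⁻¹ * Q)ᵀ) * Pᵀ := by
  have hPP : P * P⁻¹ = 1 := mul_nonsing_inv P ((isUnit_iff_isUnit_det P).mp hP)
  have hPPt : P⁻¹ᵀ * Pᵀ = 1 := by rw [← transpose_mul, hPP, transpose_one]
  calc P * Pᵀ + Q * Qᵀ = P * Pᵀ + (P * P⁻¹) * Q * Qᵀ * (P⁻¹ᵀ * Pᵀ) := by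
        rw [hPP, hPPt, Matrix.one_mul, Matrix.mul_one]
    _ = P * (1 + P⁻¹ * Q * (P⁻¹ * Q)ᵀ) * Pᵀ := by
        simp only [transpose_mul, Matrix.mul_add, Matrix.add_mul, Matrix.mul_one, Matrix.mul_assoc]

theorem transpose_mul_inv_mul_transpose_mul {P : Matrix n n R} (hP : IsUnit P)
    (A Q : Matrix n n R) :
    Pᵀ * (P * A * Pᵀ)⁻¹ * Q = A⁻¹ * (P⁻¹ * Q) := by
  have hPt : Pᵀ * Pᵀ⁻¹ = 1 :=
    mul_nonsing_inv _ ((isUnit_iff_isUnit_det _).mp ((isUnit_transpose P).mpr hP))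
  rw [Matrix.mul_inv_rev, Matrix.mul_inv_rev, ← Matrix.mul_assoc, ← Matrix.mul_assoc, hPt,
    Matrix.one_mul, Matrix.mul_assoc]

theorem transpose_mul_inv_mul_eq_inv_add_transpose {P Q : Matrix n n R} (hP : IsUnit P)
    (hQ : IsUnit Q) :
    Pᵀ * (P * Pᵀ + Q * Qᵀ)⁻¹ * Q = ((P⁻¹ * Q)⁻¹ + (P⁻¹ * Q)ᵀ)⁻¹ := by
  have hΩ : IsUnit (P⁻¹ * Q) := ((isUnit_nonsing_inv_iff).mpr hP).mul hQ
  rw [mul_transpose_add_mul_transpose_eq hP, transpose_mul_inv_mul_transpose_mul hP,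
    inv_add_transpose_eq_inv_mul hΩ, Matrix.mul_inv_rev,
    nonsing_inv_nonsing_inv _ ((isUnit_iff_isUnit_det _).mp hΩ)]

end CommRing

theorem isUnit_mul_diagonal {K : Type*} [Field K] {V : Matrix n n K} (hV : Vᵀ * V = 1)
    {d : n → K} (hd : ∀ i, d i ≠ 0) : IsUnit (V * diagonal d) :=
  ((isUnit_iff_isUnit_det V).mpr (isUnit_det_of_left_inverse hV)).mul
    (isUnit_diagonal.mpr (Pi.isUnit_iff.mpr fun i ↦ (hd i).isUnit))

section OrderedField

variable {K : Type*} [Field K] [PartialOrder K] [StarRing K] [StarOrderedRing K] [TrivialStar K]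

theorem isUnit_one_add_mul_transpose (Ω : Matrix n n K) : IsUnit (1 + Ω * Ωᵀ) := by
  rw [← conjTranspose_eq_transpose_of_trivial]
  exact (PosDef.one.add_posSemidef (posSemidef_self_mul_conjTranspose Ω)).isUnit

theorem isUnit_inv_add_transpose {Ω : Matrix n n K} (hΩ : IsUnit Ω) :
    IsUnit (Ω⁻¹ + Ωᵀ) := by
  rw [inv_add_transpose_eq_inv_mul hΩ]
  exact ((isUnit_nonsing_inv_iff).mpr hΩ).mul (isUnit_one_add_mul_transpose Ω)

end OrderedField

end Matrix

theorem svd_cross_term_identity_general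
    (p : ℕ)
    (V₁ V₂ : Matrix (Fin p) (Fin p) ℝ)
    (hV₁ : V₁ᵀ * V₁ = 1) (hV₂ : V₂ᵀ * V₂ = 1)
    (d₁ d₂ : Fin p → ℝ) (hd₁ : ∀ i, d₁ i ≠ 0) (hd₂ : ∀ i, d₂ i ≠ 0) :
    let D₁ := Matrix.diagonal d₁
    let D₂ := Matrix.diagonal d₂
    let Ωm := D₁⁻¹ * V₁ᵀ * V₂ * D₂
    let S := V₁ * D₁ ^ 2 * V₁ᵀ + V₂ * D₂ ^ 2 * V₂ᵀ
    IsUnit (Ωm⁻¹ + Ωmᵀ) ∧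
      D₁ * V₁ᵀ * S⁻¹ * (V₂ * D₂) = (Ωm⁻¹ + Ωmᵀ)⁻¹ := by
  intro D₁ D₂ Ωm S
  have hP : IsUnit (V₁ * D₁) := isUnit_mul_diagonal hV₁ hd₁
  have hQ : IsUnit (V₂ * D₂) := isUnit_mul_diagonal hV₂ hd₂
  have hΩ : Ωm = (V₁ * D₁)⁻¹ * (V₂ * D₂) := by
    simp only [Ωm, Matrix.mul_inv_rev, inv_eq_left_inv hV₁, Matrix.mul_assoc]
  have hS : S = (V₁ * D₁) * (V₁ * D₁)ᵀ + (V₂ * D₂) * (V₂ * D₂)ᵀ := by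
    simp only [S, D₁, D₂, transpose_mul, diagonal_transpose, sq, Matrix.mul_assoc]
  have hPt : D₁ * V₁ᵀ = (V₁ * D₁)ᵀ := by rw [transpose_mul, diagonal_transpose]
  refine ⟨hΩ ▸ isUnit_inv_add_transpose (((isUnit_nonsing_inv_iff).mpr hP).mul hQ), ?_⟩
  rw [hS, hPt, hΩ]
  exact transpose_mul_inv_mul_eq_inv_add_transpose hP hQ

/-- The cross-term matrix identity in the proof of Proposition 1:
with `Ω = D₁⁻¹V₁ᵀV₂D₂` and `S = V₁D₁²V₁ᵀ + V₂D₂²V₂ᵀ`, the matrix `Ω⁻¹ + Ωᵀ` is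
invertible and `D₁V₁ᵀ S⁻¹ V₂D₂ = (Ω⁻¹ + Ωᵀ)⁻¹`. -/
theorem svd_cross_term_identity
    (p : ℕ) (hp : 0 < p)
    (V₁ V₂ : Matrix (Fin p) (Fin p) ℝ)
    (hV₁ : V₁ᵀ * V₁ = 1) (hV₂ : V₂ᵀ * V₂ = 1)
    (d₁ d₂ : Fin p → ℝ) (hd₁ : ∀ i, d₁ i ≠ 0) (hd₂ : ∀ i, d₂ i ≠ 0) :
    let D₁ := Matrix.diagonal d₁
    let D₂ := Matrix.diagonal d₂
    let Ωm := D₁⁻¹ * V₁ᵀ * V₂ * D₂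
    let S := V₁ * D₁ ^ 2 * V₁ᵀ + V₂ * D₂ ^ 2 * V₂ᵀ
    IsUnit (Ωm⁻¹ + Ωmᵀ) ∧
      D₁ * V₁ᵀ * S⁻¹ * (V₂ * D₂) = (Ωm⁻¹ + Ωmᵀ)⁻¹ :=
  svd_cross_term_identity_general p V₁ V₂ hV₁ hV₂ d₁ d₂ hd₁ hd₂
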